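/- Let S be a factorizable left restriction monoid and let Y be a [Proj(S)|Tot(S)]-set. Let X be the disjoint union over projections e of the quotients Y/≡ₑ, with elements written [x]ₑ, and let p([x]ₑ) = e. Define s•[x]ₑ = [m·x]_{(se)⁺}, where m is any total element with s ≤ m. Then: (i) this is well defined (independent of the representative x of [x]ₑ and of the total element m above s); (ii) it is a monoid action of S on X; (iii) together with p it satisfies (E1) and (E2), so (S,X,p) is a supported action; (iv) the induced order on X satisfies: [x′]_f ≤ [x]ₑ if and only if f ≤ e and x′ ≡_f x; (v) the action is factorizable: every element [x]ₑ satisfies [x]ₑ = e•[x]₁ ≤ [x]₁ with p([x]₁) = 1. -/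

import Mathlib

/-- A left restriction monoid: a monoid with a unary operation `plus` (written `s⁺` in the
paper) satisfying (LR1)–(LR6). -/
class LeftRestrictionMonoid (S : Type*) extends Monoid S where
  plus : S → S
  lr1 : ∀ s : S, plus (plus s) = plus s
  lr2 : ∀ s t : S, plus (plus s * plus t) = plus s * plus t
  lr3 : ∀ s t : S, plus s * plus t = plus t * plus s
  lr4 : ∀ s : S, plus s * s = s
  lr5 : ∀ s t : S, plus (s * t) = plus (s * plus t)
  lr6 : ∀ s t : S, s * plus t = plus (s * t) * s

namespace LeftRestrictionMonoid

variable {S : Type*} [LeftRestrictionMonoid S]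

/-- The set of projections: elements with `a⁺ = a`. -/
def Proj (S : Type*) [LeftRestrictionMonoid S] : Set S := {a | plus a = a}

/-- The set of total elements: elements with `a⁺ = 1`. -/
def Tot (S : Type*) [LeftRestrictionMonoid S] : Set S := {a | plus a = 1}

/-- The natural partial order: `s ≤ t` iff `s = s⁺ t`. -/
def nle (s t : S) : Prop := s = plus s * t

end LeftRestrictionMonoid

open LeftRestrictionMonoid

/-!
Everything reduces to two facts about a total `m` above `s` and a projection `e`: the element
`s e` still lies below `m`, and `(s e)⁺ ≤ (m e)⁺`. The first lets (MPA5) identify `m·x` and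
`m'·x` modulo `≡_{(se)⁺}` for any two totals `m, m'` above `s`; the second lets (MPA4)
weaken the relation `≡_{(me)⁺}` produced by (MPA6) to `≡_{(se)⁺}`. Since `e ≤ m` gives
`e m = e = e 1`, (MPA5) also yields `m·x ≡ₑ x`, which is (E1), the description of the order,
and factorizability.
-/

namespace LeftRestrictionMonoid

variable {S : Type*} [LeftRestrictionMonoid S]

lemma plus_one : plus (1 : S) = 1 := by
  simpa using lr4 (1 : S)

lemma one_mem_Tot : (1 : S) ∈ Tot S := plus_one

lemma plus_mem_Proj (s : S) : plus s ∈ Proj S := lr1 s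

lemma plus_mul_plus_self (s : S) : plus s * plus s = plus s := by
  simpa [lr1] using lr4 (plus s)

lemma plus_mul_self_of_mem_Proj {e : S} (he : e ∈ Proj S) : plus (e * e) = e := by
  nth_rewrite 1 [← he]
  rw [lr4, he]

lemma mul_eq_self_of_nle {e m : S} (he : e ∈ Proj S) (hem : nle e m) : e * m = e := by
  nth_rewrite 1 [← he]
  exact hem.symm

lemma plus_mul_of_nle {s m : S} (hsm : nle s m) (t : S) :
    plus (s * t) = plus s * plus (m * t) := by
  conv_lhs => rw [hsm]
  rw [mul_assoc, lr5, lr2]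

lemma nle_mul_of_nle {s m e : S} (hsm : nle s m) (he : e ∈ Proj S) : nle (s * e) m := by
  rw [nle, plus_mul_of_nle hsm, mul_assoc, ← lr6, he, ← mul_assoc, ← hsm]

lemma plus_mul_nle_plus_mul_of_nle {s m : S} (hsm : nle s m) (t : S) :
    nle (plus (s * t)) (plus (m * t)) := by
  rw [nle, lr1, plus_mul_of_nle hsm, mul_assoc, plus_mul_plus_self]

end LeftRestrictionMonoid

section MatchedPairSet

variable {S : Type*} [LeftRestrictionMonoid S] {Y : Type*}
  (act : S → Y → Y) (rel : S → Y → Y → Prop)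

lemma rel_act_of_nle
    (hact_one : ∀ y : Y, act 1 y = y)
    (mpa5 : ∀ e m n : S, e ∈ Proj S → m ∈ Tot S → n ∈ Tot S → e * m = e * n →
      ∀ x : Y, rel e (act m x) (act n x))
    {e m : S} (he : e ∈ Proj S) (hm : m ∈ Tot S) (hem : nle e m) (x : Y) :
    rel e (act m x) x := by
  simpa [hact_one] using
    mpa5 e m 1 he hm one_mem_Tot (by rw [mul_one, mul_eq_self_of_nle he hem]) x

lemma rel_act_act_of_nle
    (hequiv : ∀ e ∈ Proj S, Equivalence (rel e))
    (mpa4 : ∀ e f : S, e ∈ Proj S → f ∈ Proj S → nle f e → ∀ x y : Y, rel e x y → rel f x y)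
    (mpa5 : ∀ e m n : S, e ∈ Proj S → m ∈ Tot S → n ∈ Tot S → e * m = e * n →
      ∀ x : Y, rel e (act m x) (act n x))
    (mpa6 : ∀ e m : S, e ∈ Proj S → m ∈ Tot S → ∀ x y : Y, rel e x y →
      rel (plus (m * e)) (act m x) (act m y))
    {s m m' e : S} {x x' : Y} (hm : m ∈ Tot S) (hm' : m' ∈ Tot S) (hsm : nle s m)
    (hsm' : nle s m') (he : e ∈ Proj S) (hxx' : rel e x x') :
    rel (plus (s * e)) (act m x) (act m' x') := by
  have hx : rel (plus (s * e)) (act m x) (act m x') :=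
    mpa4 _ _ (plus_mem_Proj _) (plus_mem_Proj _) (plus_mul_nle_plus_mul_of_nle hsm e) _ _
      (mpa6 e m he hm x x' hxx')
  have hm_m' : rel (plus (s * e)) (act m x') (act m' x') :=
    mpa5 _ m m' (plus_mem_Proj _) hm hm'
      (by rw [← nle_mul_of_nle hsm he, ← nle_mul_of_nle hsm' he]) x'
  exact (hequiv _ (plus_mem_Proj _)).trans hx hm_m'

lemma eq_plus_mul_and_rel_act_iff
    (hact_one : ∀ y : Y, act 1 y = y)
    (hequiv : ∀ e ∈ Proj S, Equivalence (rel e))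
    (mpa5 : ∀ e m n : S, e ∈ Proj S → m ∈ Tot S → n ∈ Tot S → e * m = e * n →
      ∀ x : Y, rel e (act m x) (act n x))
    {e f m : S} {x x' : Y} (he : e ∈ Proj S) (hf : f ∈ Proj S) (hm : m ∈ Tot S)
    (hfm : nle f m) :
    (f = plus (f * e) ∧ rel f x' (act m x)) ↔ (nle f e ∧ rel f x' x) := by
  have hfe : plus (f * e) = f * e := by rw [← hf, ← he, lr2]
  have hnle : nle f e ↔ f = f * e := by rw [nle, hf]
  have hrel := rel_act_of_nle act rel hact_one mpa5 hf hm hfm x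
  have hequivf := hequiv f hf
  rw [hfe, hnle]
  exact and_congr_right fun _ => ⟨fun h => hequivf.trans h hrel,
    fun h => hequivf.trans h (hequivf.symm hrel)⟩

end MatchedPairSet

theorem statement12_general {S : Type*} [LeftRestrictionMonoid S] {Y : Type*}
    (act : S → Y → Y) (rel : S → Y → Y → Prop)
    (hact_one : ∀ y : Y, act 1 y = y)
    (hact_mul : ∀ m n : S, m ∈ Tot S → n ∈ Tot S → ∀ y : Y, act (m * n) y = act m (act n y))
    (hequiv : ∀ e ∈ Proj S, Equivalence (rel e))
    (mpa4 : ∀ e f : S, e ∈ Proj S → f ∈ Proj S → nle f e → ∀ x y : Y, rel e x y → rel f x y)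
    (mpa5 : ∀ e m n : S, e ∈ Proj S → m ∈ Tot S → n ∈ Tot S → e * m = e * n →
      ∀ x : Y, rel e (act m x) (act n x))
    (mpa6 : ∀ e m : S, e ∈ Proj S → m ∈ Tot S → ∀ x y : Y, rel e x y →
      rel (plus (m * e)) (act m x) (act m y)) :
    -- (i) well-definedness: independent of the representative x and of the total m above s
    (∀ s m m' e : S, ∀ x x' : Y, m ∈ Tot S → m' ∈ Tot S → nle s m → nle s m' →
      e ∈ Proj S → rel e x x' → rel (plus (s * e)) (act m x) (act m' x')) ∧
    -- (ii) it is a monoid action: 1 • [x]ₑ = [x]ₑ ...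
    (∀ e : S, e ∈ Proj S →
      plus ((1 : S) * e) = e ∧ ∀ x : Y, rel e (act 1 x) x) ∧
    -- ... and (s t) • [x]ₑ = s • (t • [x]ₑ), computed with totals m ≥ s, n ≥ t, m n ≥ s t
    (∀ s t m n e : S, m ∈ Tot S → n ∈ Tot S → nle s m → nle t n → e ∈ Proj S →
      plus (s * t * e) = plus (s * plus (t * e)) ∧
      ∀ x : Y, rel (plus (s * t * e)) (act (m * n) x) (act m (act n x))) ∧
    -- (iii) the support lands in Proj(S) (and (E2) holds: p(s • [x]ₑ) = (s e)⁺ by definition)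
    (∀ s e : S, e ∈ Proj S → plus (s * e) ∈ Proj S) ∧
    -- (iii) (E1): p([x]ₑ) • [x]ₑ = e • [x]ₑ = [x]ₑ
    (∀ e m : S, e ∈ Proj S → m ∈ Tot S → nle e m →
      plus (e * e) = e ∧ ∀ x : Y, rel e (act m x) x) ∧
    -- (iv) the induced order: [x']_f ≤ [x]ₑ iff f ≤ e and x' ≡_f x
    (∀ e f m : S, ∀ x x' : Y, e ∈ Proj S → f ∈ Proj S → m ∈ Tot S → nle f m →
      ((f = plus (f * e) ∧ rel f x' (act m x)) ↔ (nle f e ∧ rel f x' x))) ∧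
    -- (v) factorizability: [x]ₑ = e • [x]₁ and p([x]₁) = 1
    (∀ e m : S, e ∈ Proj S → m ∈ Tot S → nle e m →
      plus (e * (1 : S)) = e ∧ ∀ x : Y, rel e (act m x) x) := by
  refine ⟨fun s m m' e x x' hm hm' hsm hsm' he hxx' =>
      rel_act_act_of_nle act rel hequiv mpa4 mpa5 mpa6 hm hm' hsm hsm' he hxx',
    fun e he => ⟨by rw [one_mul, he], fun x => by rw [hact_one]; exact (hequiv e he).refl x⟩,
    fun s t m n e hm hn _ _ _ => ⟨by rw [mul_assoc, lr5], fun x => by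
      rw [hact_mul m n hm hn]; exact (hequiv _ (plus_mem_Proj _)).refl _⟩,
    fun s e _ => plus_mem_Proj _,
    fun e m he hm hem =>
      ⟨plus_mul_self_of_mem_Proj he, rel_act_of_nle act rel hact_one mpa5 he hm hem⟩,
    fun e f m x x' he hf hm hfm =>
      eq_plus_mul_and_rel_act_iff act rel hact_one hequiv mpa5 he hf hm hfm,
    fun e m he hm hem =>
      ⟨by rw [mul_one, he], rel_act_of_nle act rel hact_one mpa5 he hm hem⟩⟩

/-- let `S` be a factorizable left restriction monoid and `Y` a
`[Proj(S)|Tot(S)]`-set, given by an action `act` of the total elements of `S` on `Y` and an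
equivalence relation `rel e` on `Y` for each projection `e`, satisfying (MPA3)–(MPA6).
Let `X` be the disjoint union of the quotients `Y/≡ₑ`; an element `[x]ₑ` of `X` is
represented by a pair `(e, x)` with `e ∈ Proj S`, `x ∈ Y`, two representatives `(e,x)`,
`(f,y)` being identified iff `e = f` and `rel e x y`; the support is `p([x]ₑ) = e` and the
action is `s • [x]ₑ = [m·x]_{(s e)⁺}` for any total `m` above `s`. Then: (i) the action is
well defined; (ii) it is a monoid action; (iii) with `p` it satisfies (E1) and (E2), giving
a supported action; (iv) `[x']_f ≤ [x]ₑ` iff `f ≤ e` and `x' ≡_f x`; (v) the action is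
factorizable: `[x]ₑ = e • [x]₁`. -/
theorem statement12 {S : Type*} [LeftRestrictionMonoid S] {Y : Type*}
    (hfac : ∀ s : S, ∃ m ∈ Tot S, nle s m)
    (act : S → Y → Y) (rel : S → Y → Y → Prop)
    (hact_one : ∀ y : Y, act 1 y = y)
    (hact_mul : ∀ m n : S, m ∈ Tot S → n ∈ Tot S → ∀ y : Y, act (m * n) y = act m (act n y))
    (hequiv : ∀ e ∈ Proj S, Equivalence (rel e))
    (mpa3 : ∀ x y : Y, rel 1 x y → x = y)
    (mpa4 : ∀ e f : S, e ∈ Proj S → f ∈ Proj S → nle f e → ∀ x y : Y, rel e x y → rel f x y)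
    (mpa5 : ∀ e m n : S, e ∈ Proj S → m ∈ Tot S → n ∈ Tot S → e * m = e * n →
      ∀ x : Y, rel e (act m x) (act n x))
    (mpa6 : ∀ e m : S, e ∈ Proj S → m ∈ Tot S → ∀ x y : Y, rel e x y →
      rel (plus (m * e)) (act m x) (act m y)) :
    -- (i) well-definedness: independent of the representative x and of the total m above s
    (∀ s m m' e : S, ∀ x x' : Y, m ∈ Tot S → m' ∈ Tot S → nle s m → nle s m' →
      e ∈ Proj S → rel e x x' → rel (plus (s * e)) (act m x) (act m' x')) ∧
    -- (ii) it is a monoid action: 1 • [x]ₑ = [x]ₑ ...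
    (∀ e : S, e ∈ Proj S →
      plus ((1 : S) * e) = e ∧ ∀ x : Y, rel e (act 1 x) x) ∧
    -- ... and (s t) • [x]ₑ = s • (t • [x]ₑ), computed with totals m ≥ s, n ≥ t, m n ≥ s t
    (∀ s t m n e : S, m ∈ Tot S → n ∈ Tot S → nle s m → nle t n → e ∈ Proj S →
      plus (s * t * e) = plus (s * plus (t * e)) ∧
      ∀ x : Y, rel (plus (s * t * e)) (act (m * n) x) (act m (act n x))) ∧
    -- (iii) the support lands in Proj(S) (and (E2) holds: p(s • [x]ₑ) = (s e)⁺ by definition)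
    (∀ s e : S, e ∈ Proj S → plus (s * e) ∈ Proj S) ∧
    -- (iii) (E1): p([x]ₑ) • [x]ₑ = e • [x]ₑ = [x]ₑ
    (∀ e m : S, e ∈ Proj S → m ∈ Tot S → nle e m →
      plus (e * e) = e ∧ ∀ x : Y, rel e (act m x) x) ∧
    -- (iv) the induced order: [x']_f ≤ [x]ₑ iff f ≤ e and x' ≡_f x
    (∀ e f m : S, ∀ x x' : Y, e ∈ Proj S → f ∈ Proj S → m ∈ Tot S → nle f m →
      ((f = plus (f * e) ∧ rel f x' (act m x)) ↔ (nle f e ∧ rel f x' x))) ∧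
    -- (v) factorizability: [x]ₑ = e • [x]₁ and p([x]₁) = 1
    (∀ e m : S, e ∈ Proj S → m ∈ Tot S → nle e m →
      plus (e * (1 : S)) = e ∧ ∀ x : Y, rel e (act m x) x) :=
  statement12_general act rel hact_one hact_mul hequiv mpa4 mpa5 mpa6
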